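/- arXiv:2103.16264 — 2 statements merged into one kernel-verified Lean document; each statement's English description precedes it below -/
import Mathlib

section
/- For all u > 0, σ > 0, T > 0 and r ≠ 0, it holds that ∫_0^T (u/(σ·√(2πθ)))·e^{−(u−rθ)²/(2σ²θ)} dθ = (u/r)·(Φ((−u+rT)/(σ√T)) − e^{2ur/σ²}·Φ((−u−rT)/(σ√T))). -/
/-! The closed form is an antiderivative of the integrand on `(0, ∞)`. Differentiating
`Φ((-u ± rθ)/(σ√θ))` produces two Gaussian densities whose exponents differ by exactly
`2ur/σ²`, so the reflection factor `e^{2ur/σ²}` makes them equal and the derivative collapses to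
the integrand. Both arguments of `Φ` tend to `-∞` as `θ → 0⁺`, so the antiderivative vanishes
there, and since the integrand is nonnegative it is integrable and the fundamental theorem of
calculus applies on `(0, T]`. -/

open MeasureTheory Real

/-- The standard normal cumulative distribution function `Φ`. -/
noncomputable def stdGaussianCDF (y : ℝ) : ℝ :=
  ∫ z in Set.Iic y, Real.exp (-z ^ 2 / 2) / Real.sqrt (2 * Real.pi)

open Filter Set Topology

theorem hasDerivAt_integral_Iic {f : ℝ → ℝ} {y : ℝ} (hf : Integrable f)
    (hcont : ContinuousAt f y) : HasDerivAt (fun x => ∫ z in Iic x, f z) (f y) y := by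
  have hsplit : (fun x => ∫ z in Iic x, f z)
      = fun x => (∫ z in Iic 0, f z) + ∫ z in (0 : ℝ)..x, f z := by
    funext x
    rw [← intervalIntegral.integral_Iic_sub_Iic hf.integrableOn hf.integrableOn]
    ring
  rw [hsplit]
  exact (intervalIntegral.integral_hasDerivAt_right hf.intervalIntegrable
    hf.aestronglyMeasurable.stronglyMeasurableAtFilter hcont).const_add _

theorem integral_eq_sub_of_hasDerivAt_of_tendsto_of_nonneg {f f' : ℝ → ℝ} {a b fa : ℝ}
    (hab : a < b) (hderiv : ∀ x ∈ Ioc a b, HasDerivAt f (f' x) x)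
    (hpos : ∀ x ∈ Ioo a b, 0 ≤ f' x) (ha : Tendsto f (𝓝[>] a) (𝓝 fa)) :
    ∫ x in a..b, f' x = f b - fa := by
  set g := Function.update f a fa
  have hg : ∀ x ∈ Ioc a b, g =ᶠ[𝓝 x] f := fun x hx =>
    (eventually_ne_nhds hx.1.ne').mono fun y hy => Function.update_of_ne hy _ _
  have hgderiv : ∀ x ∈ Ioo a b, HasDerivAt g (f' x) x := fun x hx =>
    (hderiv x (Ioo_subset_Ioc_self hx)).congr_of_eventuallyEq (hg x (Ioo_subset_Ioc_self hx))
  have hgcont : ContinuousOn g (Icc a b) := by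
    intro x hx
    rcases hx.1.eq_or_lt with rfl | hax
    · exact continuousWithinAt_update_same.2 <| ha.mono_left <|
        nhdsWithin_mono _ fun y hy => lt_of_le_of_ne hy.1.1 (Ne.symm hy.2)
    · exact ((hderiv x ⟨hax, hx.2⟩).continuousAt.congr
        (hg x ⟨hax, hx.2⟩).symm).continuousWithinAt
  have hint : IntervalIntegrable f' volume a b := by
    refine intervalIntegral.intervalIntegrable_deriv_of_nonneg (g := g) ?_ ?_ ?_ <;>
      simpa only [uIcc_of_le hab.le, min_eq_left hab.le, max_eq_right hab.le]
  rw [intervalIntegral.integral_eq_sub_of_hasDerivAt_of_le hab.le hgcont hgderiv hint]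
  simp only [g, Function.update_self, Function.update_of_ne hab.ne']

noncomputable def stdGaussianPDF (z : ℝ) : ℝ := exp (-z ^ 2 / 2) / √(2 * π)

theorem continuous_stdGaussianPDF : Continuous stdGaussianPDF := by
  unfold stdGaussianPDF
  fun_prop

theorem integrable_stdGaussianPDF : Integrable stdGaussianPDF := by
  convert (integrable_exp_neg_mul_sq (b := 1 / 2) (by norm_num)).div_const √(2 * π) using 1
  funext z
  rw [stdGaussianPDF]
  ring_nf

theorem hasDerivAt_stdGaussianCDF (y : ℝ) :
    HasDerivAt stdGaussianCDF (stdGaussianPDF y) y :=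
  hasDerivAt_integral_Iic integrable_stdGaussianPDF
    continuous_stdGaussianPDF.continuousAt

theorem tendsto_stdGaussianCDF_atBot : Tendsto stdGaussianCDF atBot (𝓝 0) :=
  tendsto_integral_Iic_zero tendsto_id

theorem hasDerivAt_affine_div_mul_sqrt (a b : ℝ) {c θ : ℝ} (hc : c ≠ 0) (hθ : 0 < θ) :
    HasDerivAt (fun t => (a + b * t) / (c * √t)) ((b * θ - a) / (2 * c * θ * √θ)) θ := by
  have hnum : HasDerivAt (fun t => a + b * t) b θ := by
    simpa using ((hasDerivAt_id θ).const_mul b).const_add a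
  refine (hnum.div ((hasDerivAt_sqrt hθ.ne').const_mul c) (by positivity)).congr_deriv ?_
  field_simp
  rw [sq_sqrt hθ.le]
  ring

theorem tendsto_affine_div_mul_sqrt_atBot {a c : ℝ} (b : ℝ) (ha : a < 0) (hc : 0 < c) :
    Tendsto (fun t => (a + b * t) / (c * √t)) (𝓝[>] 0) atBot := by
  have hnum : Tendsto (fun t => a + b * t) (𝓝[>] 0) (𝓝 a) :=
    tendsto_nhdsWithin_of_tendsto_nhds <|
      (by fun_prop : Continuous fun t : ℝ => a + b * t).tendsto' 0 a (by simp)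
  have hden : Tendsto (fun t => c * √t) (𝓝[>] 0) (𝓝[>] 0) := by
    refine tendsto_nhdsWithin_of_tendsto_nhds_of_eventually_within _ ?_ ?_
    · exact ((by fun_prop : Continuous fun t : ℝ => c * √t).tendsto' 0 0 (by simp)).mono_left
        nhdsWithin_le_nhds
    · filter_upwards [self_mem_nhdsWithin] with t (ht : 0 < t)
      exact mul_pos hc (sqrt_pos.2 ht)
  exact (hnum.neg_mul_atTop ha (tendsto_inv_nhdsGT_zero.comp hden)).congr fun _ =>
    (div_eq_mul_inv _ _).symm

theorem stdGaussianPDF_affine_div_mul_sqrt (a b c : ℝ) {θ : ℝ} (hθ : 0 ≤ θ) :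
    stdGaussianPDF ((a + b * θ) / (c * √θ))
      = exp (-(a + b * θ) ^ 2 / (2 * c ^ 2 * θ)) / √(2 * π) := by
  rw [stdGaussianPDF, div_pow, mul_pow, sq_sqrt hθ]
  ring_nf

theorem exp_mul_stdGaussianPDF_reflect (u r : ℝ) {σ θ : ℝ} (hσ : σ ≠ 0) (hθ : 0 < θ) :
    exp (2 * u * r / σ ^ 2) * stdGaussianPDF ((-u - r * θ) / (σ * √θ))
      = stdGaussianPDF ((-u + r * θ) / (σ * √θ)) := by
  rw [sub_eq_add_neg, ← neg_mul, stdGaussianPDF_affine_div_mul_sqrt _ _ _ hθ.le,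
    stdGaussianPDF_affine_div_mul_sqrt _ _ _ hθ.le, mul_div_assoc', ← exp_add]
  congr 2
  field_simp
  ring

/-- For `θ > 0` this is `E[τ; τ ≤ θ]`, where `τ` is the first time `σ W_t + r t` reaches `u`;
its derivative is `θ` times the density of `τ`. -/
noncomputable def firstPassagePartialMean (u σ r θ : ℝ) : ℝ :=
  u / r * (stdGaussianCDF ((-u + r * θ) / (σ * √θ))
    - exp (2 * u * r / σ ^ 2) * stdGaussianCDF ((-u - r * θ) / (σ * √θ)))

theorem hasDerivAt_firstPassagePartialMean (u : ℝ) {σ r θ : ℝ} (hσ : σ ≠ 0) (hr : r ≠ 0)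
    (hθ : 0 < θ) :
    HasDerivAt (firstPassagePartialMean u σ r)
      (u / (σ * √(2 * π * θ)) * exp (-(u - r * θ) ^ 2 / (2 * σ ^ 2 * θ))) θ := by
  have hA := hasDerivAt_affine_div_mul_sqrt (-u) r hσ hθ
  have hB := hasDerivAt_affine_div_mul_sqrt (-u) (-r) hσ hθ
  simp only [neg_mul, ← sub_eq_add_neg] at hB
  refine ((((hasDerivAt_stdGaussianCDF _).comp θ hA).sub
    (((hasDerivAt_stdGaussianCDF _).comp θ hB).const_mul (exp (2 * u * r / σ ^ 2)))).const_mul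
      (u / r)).congr_deriv ?_
  have hsq : (-u + r * θ) ^ 2 = (u - r * θ) ^ 2 := by ring
  rw [← mul_assoc (exp _), exp_mul_stdGaussianPDF_reflect u r hσ hθ,
    stdGaussianPDF_affine_div_mul_sqrt _ _ _ hθ.le, hsq,
    sqrt_mul (by positivity : (0 : ℝ) ≤ 2 * π) θ]
  field_simp
  ring

theorem tendsto_firstPassagePartialMean_nhdsGT_zero {u σ : ℝ} (r : ℝ) (hu : 0 < u) (hσ : 0 < σ) :
    Tendsto (firstPassagePartialMean u σ r) (𝓝[>] 0) (𝓝 0) := by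
  have hA := tendsto_stdGaussianCDF_atBot.comp
    (tendsto_affine_div_mul_sqrt_atBot r (neg_neg_of_pos hu) hσ)
  have hB := tendsto_stdGaussianCDF_atBot.comp
    (tendsto_affine_div_mul_sqrt_atBot (-r) (neg_neg_of_pos hu) hσ)
  simp only [neg_mul, ← sub_eq_add_neg] at hB
  have hF := (hA.sub (hB.const_mul (exp (2 * u * r / σ ^ 2)))).const_mul (u / r)
  rwa [mul_zero, sub_zero, mul_zero] at hF

/-- For `u > 0`, `σ > 0`, `T > 0` and `r ≠ 0`,
`∫_0^T (u/(σ√(2πθ)))·e^{−(u−rθ)²/(2σ²θ)} dθ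
  = (u/r)·(Φ((−u+rT)/(σ√T)) − e^{2ur/σ²}·Φ((−u−rT)/(σ√T)))`. -/
theorem stmt_6 (u σ T r : ℝ) (hu : 0 < u) (hσ : 0 < σ) (hT : 0 < T) (hr : r ≠ 0) :
    ∫ θ in (0 : ℝ)..T,
        u / (σ * Real.sqrt (2 * Real.pi * θ)) *
          Real.exp (-(u - r * θ) ^ 2 / (2 * σ ^ 2 * θ))
      = u / r * (stdGaussianCDF ((-u + r * T) / (σ * Real.sqrt T))
          - Real.exp (2 * u * r / σ ^ 2) *
            stdGaussianCDF ((-u - r * T) / (σ * Real.sqrt T))) := by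
  have h := integral_eq_sub_of_hasDerivAt_of_tendsto_of_nonneg hT
    (fun θ hθ => hasDerivAt_firstPassagePartialMean u hσ.ne' hr hθ.1)
    (fun θ hθ => by have := hθ.1; positivity)
    (tendsto_firstPassagePartialMean_nhdsGT_zero r hu hσ)
  rwa [sub_zero] at h
end

section
/- For all u > 0, σ > 0, T > 0 and r ∈ ℝ, it holds that ∫_{−∞}^u (√2·u/(σ³·√(πT)))·exp(σ^{−2}·(−(2u−x)²/(2T) + r·x − r²T/2)) dx = (2u/σ²)·e^{2ur/σ²}·Φ((−u−rT)/(σ√T)). -/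
open MeasureTheory Real

/-- For `u > 0`, `σ > 0`, `T > 0` and `r ∈ ℝ`,
`∫_{−∞}^u (√2·u/(σ³√(πT)))·exp(σ^{−2}(−(2u−x)²/(2T) + rx − r²T/2)) dx
  = (2u/σ²)·e^{2ur/σ²}·Φ((−u−rT)/(σ√T))`. -/
theorem stmt_8 (u σ T r : ℝ) (hu : 0 < u) (hσ : 0 < σ) (hT : 0 < T) :
    ∫ x in Set.Iic u,
        Real.sqrt 2 * u / (σ ^ 3 * Real.sqrt (Real.pi * T)) *
          Real.exp ((-(2 * u - x) ^ 2 / (2 * T) + r * x - r ^ 2 * T / 2) / σ ^ 2)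
      = 2 * u / σ ^ 2 * Real.exp (2 * u * r / σ ^ 2) *
          stdGaussianCDF ((-u - r * T) / (σ * Real.sqrt T)) := by
  set s : ℝ := σ * Real.sqrt T with hs_def
  have hsT : 0 < Real.sqrt T := Real.sqrt_pos.2 hT
  have hs : 0 < s := mul_pos hσ hsT
  have hs2 : s ^ 2 = σ ^ 2 * T := by
    rw [hs_def, mul_pow, Real.sq_sqrt hT.le]
  set v : ℝ := (-u - r * T) / s with hv_def
  set m : ℝ := 2 * u + r * T with hm_def
  set K : ℝ := 2 * u / σ ^ 2 * Real.exp (2 * u * r / σ ^ 2) with hK_def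
  set F : ℝ → ℝ := (Set.Iic v).indicator (fun z => Real.exp (-z ^ 2 / 2) / Real.sqrt (2 * Real.pi))
    with hF_def
  have hπ : (0 : ℝ) < Real.pi := Real.pi_pos
  have key : ∀ x : ℝ, (Set.Iic u).indicator
      (fun x => Real.sqrt 2 * u / (σ ^ 3 * Real.sqrt (Real.pi * T)) *
        Real.exp ((-(2 * u - x) ^ 2 / (2 * T) + r * x - r ^ 2 * T / 2) / σ ^ 2)) x
      = (K / s) * F ((x - m) / s) := by
    intro x
    have hmem : x ∈ Set.Iic u ↔ (x - m) / s ∈ Set.Iic v := by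
      simp only [Set.mem_Iic, hv_def, div_le_div_iff_of_pos_right hs]
      constructor <;> intro h <;> [linarith; linarith]
    by_cases hx : x ∈ Set.Iic u
    · rw [Set.indicator_of_mem hx, hF_def, Set.indicator_of_mem (hmem.1 hx)]
      have hexp : (-(2 * u - x) ^ 2 / (2 * T) + r * x - r ^ 2 * T / 2) / σ ^ 2
          = 2 * u * r / σ ^ 2 + -((x - m) / s) ^ 2 / 2 := by
        rw [div_pow, hs2, hm_def]
        field_simp
        ring
      rw [hexp, Real.exp_add]
      have h2π : Real.sqrt (2 * Real.pi) = Real.sqrt 2 * Real.sqrt Real.pi :=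
        Real.sqrt_mul (by norm_num) _
      have hπT : Real.sqrt (Real.pi * T) = Real.sqrt Real.pi * Real.sqrt T :=
        Real.sqrt_mul hπ.le _
      have hσ3 : σ ^ 3 = σ ^ 2 * σ := by ring
      rw [hK_def, hs_def, h2π, hπT, hσ3]
      have h2 : (0:ℝ) < Real.sqrt 2 := Real.sqrt_pos.2 (by norm_num)
      have hπ' : (0:ℝ) < Real.sqrt Real.pi := Real.sqrt_pos.2 hπ
      have hsq2 : Real.sqrt 2 * Real.sqrt 2 = 2 := Real.mul_self_sqrt (by norm_num)
      field_simp
      ring_nf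
      rw [Real.sq_sqrt (by norm_num : (0:ℝ) ≤ 2)]
    · rw [Set.indicator_of_notMem hx, hF_def,
        Set.indicator_of_notMem (fun h => hx (hmem.2 h)), mul_zero]
  calc ∫ x in Set.Iic u,
        Real.sqrt 2 * u / (σ ^ 3 * Real.sqrt (Real.pi * T)) *
          Real.exp ((-(2 * u - x) ^ 2 / (2 * T) + r * x - r ^ 2 * T / 2) / σ ^ 2)
      = ∫ x : ℝ, (K / s) * F ((x - m) / s) := by
        rw [← integral_indicator measurableSet_Iic]
        exact integral_congr_ae (Filter.Eventually.of_forall key)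
    _ = (K / s) * ∫ x : ℝ, F ((x - m) / s) := integral_const_mul _ _
    _ = (K / s) * ∫ x : ℝ, F (x / s) := by
        congr 1
        exact integral_sub_right_eq_self (fun x : ℝ => F (x / s)) m
    _ = (K / s) * (s * ∫ z : ℝ, F z) := by
        rw [MeasureTheory.Measure.integral_comp_div F s, abs_of_pos hs, smul_eq_mul]
    _ = K * stdGaussianCDF v := by
        rw [hF_def, integral_indicator measurableSet_Iic]
        rw [stdGaussianCDF]
        field_simp
end
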